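/- arXiv:math/0001008 — 4 statements merged into one kernel-verified Lean document; each statement's English description precedes it below -/
import Mathlib

section
/- The function Θ(w,z,x,y) = σ/(wx+zy), defined on the open set where wx+zy ≠ 0, satisfies the second heavenly equation Θ_{xw} + Θ_{yz} + Θ_{xx}Θ_{yy} − (Θ_{xy})² = 0, for any constant σ. -/
/-- Partial derivative with respect to the first variable `w`. -/
noncomputable def pw (f : ℂ → ℂ → ℂ → ℂ → ℂ) : ℂ → ℂ → ℂ → ℂ → ℂ :=
  fun w z x y => deriv (fun t => f t z x y) w

/-- Partial derivative with respect to the second variable `z`. -/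
noncomputable def pz (f : ℂ → ℂ → ℂ → ℂ → ℂ) : ℂ → ℂ → ℂ → ℂ → ℂ :=
  fun w z x y => deriv (fun t => f w t x y) z

/-- Partial derivative with respect to the third variable `x`. -/
noncomputable def px (f : ℂ → ℂ → ℂ → ℂ → ℂ) : ℂ → ℂ → ℂ → ℂ → ℂ :=
  fun w z x y => deriv (fun t => f w z t y) x

/-- Partial derivative with respect to the fourth variable `y`. -/
noncomputable def py (f : ℂ → ℂ → ℂ → ℂ → ℂ) : ℂ → ℂ → ℂ → ℂ → ℂ :=
  fun w z x y => deriv (fun t => f w z x t) y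

/-- The Sparling–Tod potential Θ = σ/(wx+zy). -/
noncomputable def STpot (σ : ℂ) : ℂ → ℂ → ℂ → ℂ → ℂ :=
  fun w z x y => σ / (w * x + z * y)

/-!
Θ = σ/D with D = wx + zy. On each coordinate line D is affine, so every partial derivative of Θ of
order at most two is (affine)/(affine)ⁿ on that line and is differentiated in closed form. The
equation then splits: Θ_{xw} = σ(wx - zy)/D³ = -Θ_{yz}, and Θ_{xx}Θ_{yy} = 4σ²w²z²/D⁶ = Θ_{xy}².
-/

section AffineQuotient

variable {𝕜 : Type*} [NontriviallyNormedField 𝕜]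

theorem hasDerivAt_affine_div_affine_pow (a b c d s : 𝕜) (n : ℕ) (hs : a * s + b ≠ 0) :
    HasDerivAt (fun t => (c * t + d) / (a * t + b) ^ n)
      ((c * (a * s + b) - n * a * (c * s + d)) / (a * s + b) ^ (n + 1)) s := by
  have hnum : HasDerivAt (fun t => c * t + d) c s := by
    simpa using ((hasDerivAt_id s).const_mul c).add_const d
  have hden : HasDerivAt (fun t => a * t + b) a s := by
    simpa using ((hasDerivAt_id s).const_mul a).add_const b
  refine (hnum.fun_div (hden.fun_pow n) (pow_ne_zero n hs)).congr_deriv ?_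
  rcases n with _ | n
  · simp [mul_div_cancel_right₀ _ hs]
  · rw [Nat.add_sub_cancel]
    field_simp
    push_cast
    ring

theorem deriv_eq_of_eqOn_affine_div_affine_pow {f : 𝕜 → 𝕜} {a b c d s : 𝕜} {n : ℕ}
    (hf : ∀ t, a * t + b ≠ 0 → f t = (c * t + d) / (a * t + b) ^ n) (hs : a * s + b ≠ 0) :
    deriv f s = (c * (a * s + b) - n * a * (c * s + d)) / (a * s + b) ^ (n + 1) := by
  have hopen : IsOpen {t : 𝕜 | a * t + b ≠ 0} := isOpen_ne_fun (by fun_prop) (by fun_prop)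
  have hev : f =ᶠ[nhds s] fun t => (c * t + d) / (a * t + b) ^ n :=
    Filter.eventually_of_mem (hopen.mem_nhds hs) hf
  rw [hev.deriv_eq, (hasDerivAt_affine_div_affine_pow a b c d s n hs).deriv]

end AffineQuotient

section SparlingTod

variable {σ w z x y : ℂ}

theorem pw_STpot (h : w * x + z * y ≠ 0) :
    pw (STpot σ) w z x y = -(σ * x) / (w * x + z * y) ^ 2 := by
  have hf : ∀ t, x * t + z * y ≠ 0 →
      STpot σ t z x y = (0 * t + σ) / (x * t + z * y) ^ 1 := by
    intro t _
    simp only [STpot]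
    ring
  rw [pw, deriv_eq_of_eqOn_affine_div_affine_pow hf (by convert h using 1; ring)]
  ring

theorem pz_STpot (h : w * x + z * y ≠ 0) :
    pz (STpot σ) w z x y = -(σ * y) / (w * x + z * y) ^ 2 := by
  have hf : ∀ t, y * t + w * x ≠ 0 →
      STpot σ w t x y = (0 * t + σ) / (y * t + w * x) ^ 1 := by
    intro t _
    simp only [STpot]
    ring
  rw [pz, deriv_eq_of_eqOn_affine_div_affine_pow hf (by convert h using 1; ring)]
  ring

theorem px_STpot (h : w * x + z * y ≠ 0) :
    px (STpot σ) w z x y = -(σ * w) / (w * x + z * y) ^ 2 := by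
  have hf : ∀ t, w * t + z * y ≠ 0 →
      STpot σ w z t y = (0 * t + σ) / (w * t + z * y) ^ 1 := by
    intro t _
    simp only [STpot]
    ring
  rw [px, deriv_eq_of_eqOn_affine_div_affine_pow hf h]
  ring

theorem py_STpot (h : w * x + z * y ≠ 0) :
    py (STpot σ) w z x y = -(σ * z) / (w * x + z * y) ^ 2 := by
  have hf : ∀ t, z * t + w * x ≠ 0 →
      STpot σ w z x t = (0 * t + σ) / (z * t + w * x) ^ 1 := by
    intro t _
    simp only [STpot]
    ring
  rw [py, deriv_eq_of_eqOn_affine_div_affine_pow hf (by convert h using 1; ring)]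
  ring

theorem px_pw_STpot (h : w * x + z * y ≠ 0) :
    px (pw (STpot σ)) w z x y = σ * (w * x - z * y) / (w * x + z * y) ^ 3 := by
  have hf : ∀ t, w * t + z * y ≠ 0 →
      pw (STpot σ) w z t y = (-σ * t + 0) / (w * t + z * y) ^ 2 := by
    intro t ht
    rw [pw_STpot ht]
    ring
  rw [px, deriv_eq_of_eqOn_affine_div_affine_pow hf h]
  ring

theorem py_pz_STpot (h : w * x + z * y ≠ 0) :
    py (pz (STpot σ)) w z x y = σ * (z * y - w * x) / (w * x + z * y) ^ 3 := by
  have hf : ∀ t, z * t + w * x ≠ 0 →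
      pz (STpot σ) w z x t = (-σ * t + 0) / (z * t + w * x) ^ 2 := by
    intro t ht
    rw [pz_STpot (by convert ht using 1; ring)]
    ring
  rw [py, deriv_eq_of_eqOn_affine_div_affine_pow hf (by convert h using 1; ring)]
  ring

theorem px_px_STpot (h : w * x + z * y ≠ 0) :
    px (px (STpot σ)) w z x y = 2 * σ * w ^ 2 / (w * x + z * y) ^ 3 := by
  have hf : ∀ t, w * t + z * y ≠ 0 →
      px (STpot σ) w z t y = (0 * t + -(σ * w)) / (w * t + z * y) ^ 2 := by
    intro t ht
    rw [px_STpot ht]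
    ring
  rw [px, deriv_eq_of_eqOn_affine_div_affine_pow hf h]
  ring

theorem py_py_STpot (h : w * x + z * y ≠ 0) :
    py (py (STpot σ)) w z x y = 2 * σ * z ^ 2 / (w * x + z * y) ^ 3 := by
  have hf : ∀ t, z * t + w * x ≠ 0 →
      py (STpot σ) w z x t = (0 * t + -(σ * z)) / (z * t + w * x) ^ 2 := by
    intro t ht
    rw [py_STpot (by convert ht using 1; ring)]
    ring
  rw [py, deriv_eq_of_eqOn_affine_div_affine_pow hf (by convert h using 1; ring)]
  ring

theorem px_py_STpot (h : w * x + z * y ≠ 0) :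
    px (py (STpot σ)) w z x y = 2 * σ * w * z / (w * x + z * y) ^ 3 := by
  have hf : ∀ t, w * t + z * y ≠ 0 →
      py (STpot σ) w z t y = (0 * t + -(σ * z)) / (w * t + z * y) ^ 2 := by
    intro t ht
    rw [py_STpot ht]
    ring
  rw [px, deriv_eq_of_eqOn_affine_div_affine_pow hf h]
  ring

end SparlingTod

/-- Θ = σ/(wx+zy) satisfies the second heavenly equation
Θ_{xw} + Θ_{yz} + Θ_{xx}Θ_{yy} − (Θ_{xy})² = 0 where wx+zy ≠ 0. -/
theorem sparlingTod_solves_second_heavenly (σ : ℂ) (w z x y : ℂ)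
    (h : w * x + z * y ≠ 0) :
    px (pw (STpot σ)) w z x y + py (pz (STpot σ)) w z x y
      + px (px (STpot σ)) w z x y * py (py (STpot σ)) w z x y
      - (px (py (STpot σ)) w z x y) ^ 2 = 0 := by
  rw [px_pw_STpot h, py_pz_STpot h, px_px_STpot h, py_py_STpot h, px_py_STpot h]
  ring
end

section
/- For every natural number n, the function φ_n(w,z,x,y) = (−y/w)^n · 1/(wx+zy) satisfies the flat ultrahyperbolic wave equation φ_{xw} + φ_{yz} = 0 on the region where w ≠ 0 and wx+zy ≠ 0. -/
/-- φ_n(w,z,x,y) = (−y/w)^n / (wx+zy). -/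
noncomputable def phiSeq (n : ℕ) : ℂ → ℂ → ℂ → ℂ → ℂ :=
  fun w z x y => (-y / w) ^ n * (1 / (w * x + z * y))

/-!
Write `A = wx + zy` and `u = -y/w`. Then `g u / A` solves the wave equation for every `g`
differentiable at `u`: the terms in `g' u` cancel between `∂x∂w` and `∂y∂z`, and what is left is
`-g u (A - 2wx) / A³ - g u (A - 2zy) / A³ = -2 g u (A - (wx + zy)) / A³ = 0`.
`φ_n` is the case `g u = uⁿ`.
-/

open Filter Topology

noncomputable def scaledInvForm (g : ℂ → ℂ) : ℂ → ℂ → ℂ → ℂ → ℂ :=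
  fun w z x y => g (-y / w) * (1 / (w * x + z * y))

variable {g : ℂ → ℂ} {w z x y : ℂ}

theorem hasDerivAt_scaledInvForm_w (hw : w ≠ 0) (hA : w * x + z * y ≠ 0)
    (hg : DifferentiableAt ℂ g (-y / w)) :
    HasDerivAt (fun t => scaledInvForm g t z x y)
      (deriv g (-y / w) * y / (w ^ 2 * (w * x + z * y)) - g (-y / w) * x / (w * x + z * y) ^ 2)
      w := by
  have hu : HasDerivAt (fun t => -y / t) (y / w ^ 2) w :=
    ((hasDerivAt_const w (-y)).fun_div (hasDerivAt_id w) hw).congr_deriv (by simp)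
  have hinv := (((hasDerivAt_id w).mul_const x).add_const (z * y)).fun_inv hA
  simp only [scaledInvForm, one_div]
  refine ((hg.hasDerivAt.comp w hu).fun_mul hinv).congr_deriv ?_
  simp only [Function.comp_apply, id]
  field_simp
  ring

theorem hasDerivAt_scaledInvForm_z (g : ℂ → ℂ) (hA : w * x + z * y ≠ 0) :
    HasDerivAt (fun t => scaledInvForm g w t x y) (-(g (-y / w) * y / (w * x + z * y) ^ 2)) z := by
  have hinv := (((hasDerivAt_id z).mul_const y).const_add (w * x)).fun_inv hA
  simp only [scaledInvForm, one_div]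
  refine (hinv.const_mul (g (-y / w))).congr_deriv ?_
  simp only [id]
  ring

theorem px_pw_scaledInvForm (hw : w ≠ 0) (hA : w * x + z * y ≠ 0)
    (hg : DifferentiableAt ℂ g (-y / w)) :
    px (pw (scaledInvForm g)) w z x y =
      -(deriv g (-y / w) * y / (w * (w * x + z * y) ^ 2))
        - g (-y / w) * (w * x + z * y - 2 * w * x) / (w * x + z * y) ^ 3 := by
  have hpw : (fun t => pw (scaledInvForm g) w z t y) =ᶠ[𝓝 x] fun t =>
      deriv g (-y / w) * y / (w ^ 2 * (w * t + z * y)) - g (-y / w) * t / (w * t + z * y) ^ 2 := by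
    filter_upwards [(by fun_prop : Continuous fun t => w * t + z * y).continuousAt.eventually_ne hA]
      with t ht
    exact (hasDerivAt_scaledInvForm_w hw ht hg).deriv
  rw [px, hpw.deriv_eq]
  generalize deriv g (-y / w) * y = a
  generalize g (-y / w) = c
  have hA' : HasDerivAt (fun t => w * t + z * y) w x := by
    simpa using ((hasDerivAt_id x).const_mul w).add_const (z * y)
  have hF := (((hA'.const_mul (w ^ 2)).fun_inv (mul_ne_zero (pow_ne_zero 2 hw) hA)).const_mul
    a).fun_sub (((hasDerivAt_id' x).const_mul c).fun_div (hA'.fun_pow 2) (pow_ne_zero 2 hA))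
  refine (hF.congr_deriv ?_).deriv
  field_simp
  ring

theorem py_pz_scaledInvForm (hw : w ≠ 0) (hA : w * x + z * y ≠ 0)
    (hg : DifferentiableAt ℂ g (-y / w)) :
    py (pz (scaledInvForm g)) w z x y =
      deriv g (-y / w) * y / (w * (w * x + z * y) ^ 2)
        - g (-y / w) * (w * x + z * y - 2 * z * y) / (w * x + z * y) ^ 3 := by
  have hpz : (fun t => pz (scaledInvForm g) w z x t) =ᶠ[𝓝 y] fun t =>
      -(g (-t / w) * t / (w * x + z * t) ^ 2) := by
    filter_upwards [(by fun_prop : Continuous fun t => w * x + z * t).continuousAt.eventually_ne hA]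
      with t ht
    exact (hasDerivAt_scaledInvForm_z g ht).deriv
  rw [py, hpz.deriv_eq]
  have hu : HasDerivAt (fun t => -t / w) (-1 / w) y := (hasDerivAt_id' y).neg.div_const w
  have hA' : HasDerivAt (fun t => w * x + z * t) z y := by
    simpa using ((hasDerivAt_id y).const_mul z).const_add (w * x)
  have hF := (((hg.hasDerivAt.comp y hu).fun_mul (hasDerivAt_id' y)).fun_div (hA'.fun_pow 2)
    (pow_ne_zero 2 hA)).fun_neg
  refine (hF.congr_deriv ?_).deriv
  simp only [Function.comp_apply]
  generalize deriv g (-y / w) = d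
  generalize g (-y / w) = c
  generalize w * x + z * y = A at hA ⊢
  field_simp
  ring

theorem scaledInvForm_solves_flat_wave (hw : w ≠ 0) (hA : w * x + z * y ≠ 0)
    (hg : DifferentiableAt ℂ g (-y / w)) :
    px (pw (scaledInvForm g)) w z x y + py (pz (scaledInvForm g)) w z x y = 0 := by
  rw [px_pw_scaledInvForm hw hA hg, py_pz_scaledInvForm hw hA hg]
  field_simp
  ring

/-- Each φ_n = (−y/w)^n/(wx+zy) satisfies the flat wave equation
φ_{xw} + φ_{yz} = 0 on the region {w ≠ 0, wx+zy ≠ 0}. -/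
theorem phiSeq_solves_flat_wave (n : ℕ) (w z x y : ℂ)
    (hw : w ≠ 0) (h : w * x + z * y ≠ 0) :
    px (pw (phiSeq n)) w z x y + py (pz (phiSeq n)) w z x y = 0 :=
  scaledInvForm_solves_flat_wave (g := (· ^ n)) hw h (differentiableAt_pow n)
end

section
/- Among the functions φ_n(w,z,x,y) = (−y/w)^n/(wx+zy) for natural numbers n, the function Θ = φ_n satisfies the full (nonlinear) second heavenly equation Θ_{xw} + Θ_{yz} + Θ_{xx}Θ_{yy} − (Θ_{xy})² = 0 on the region {w ≠ 0, wx+zy ≠ 0} if and only if n = 0 or n = 2. -/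
/-!
A direct computation with `u = -y/w` and `D = wx + zy`: the linear part
`Θ_xw + Θ_yz` of the equation vanishes for every `φ_n`, while the Monge–Ampère part is
`Θ_xx Θ_yy - Θ_xy² = n (n - 2) u^(2(n-1)) / D⁴`. Taking `y ≠ 0` shows that this vanishes on the
whole domain only when `n (n - 2) = 0`.
-/

open Filter Topology

noncomputable def secondHeavenly (Θ : ℂ → ℂ → ℂ → ℂ → ℂ) (w z x y : ℂ) : ℂ :=
  px (pw Θ) w z x y + py (pz Θ) w z x y
    + px (px Θ) w z x y * py (py Θ) w z x y - (px (py Θ) w z x y) ^ 2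

def EqOnDomain (f g : ℂ → ℂ → ℂ → ℂ → ℂ) : Prop :=
  ∀ w z x y : ℂ, w ≠ 0 → w * x + z * y ≠ 0 → f w z x y = g w z x y

namespace EqOnDomain

variable {f g h : ℂ → ℂ → ℂ → ℂ → ℂ}

theorem trans (hfg : EqOnDomain f g) (hgh : EqOnDomain g h) : EqOnDomain f h :=
  fun w z x y hw hD => (hfg w z x y hw hD).trans (hgh w z x y hw hD)

theorem px (hfg : EqOnDomain f g) : EqOnDomain (px f) (px g) := by
  intro w z x y hw hD
  have hU : ∀ᶠ t in 𝓝 x, w * t + z * y ≠ 0 :=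
    (by fun_prop : Continuous fun t => w * t + z * y).continuousAt.eventually_ne hD
  exact EventuallyEq.deriv_eq (hU.mono fun t ht => hfg w z t y hw ht)

theorem py (hfg : EqOnDomain f g) : EqOnDomain (py f) (py g) := by
  intro w z x y hw hD
  have hU : ∀ᶠ t in 𝓝 y, w * x + z * t ≠ 0 :=
    (by fun_prop : Continuous fun t => w * x + z * t).continuousAt.eventually_ne hD
  exact EventuallyEq.deriv_eq (hU.mono fun t ht => hfg w z x t hw ht)

end EqOnDomain

section

variable (n : ℕ) {w z x y : ℂ}

theorem hasDerivAt_phiSeq_x (hD : w * x + z * y ≠ 0) :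
    HasDerivAt (fun t => phiSeq n w z t y) (-w * (-y / w) ^ n / (w * x + z * y) ^ 2) x := by
  have hD' := (((hasDerivAt_id' x).const_mul w).add_const (z * y)).fun_inv hD
  simp only [phiSeq, one_div]
  exact (hD'.const_mul _).congr_deriv (by ring)

theorem hasDerivAt_phiSeq_y (hD : w * x + z * y ≠ 0) :
    HasDerivAt (fun t => phiSeq n w z x t)
      (-(n / w) * (-y / w) ^ (n - 1) / (w * x + z * y)
        - z * (-y / w) ^ n / (w * x + z * y) ^ 2) y := by
  have hu := ((hasDerivAt_id' y).fun_neg.div_const w).fun_pow n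
  have hD' := (((hasDerivAt_id' y).const_mul z).const_add (w * x)).fun_inv hD
  simp only [phiSeq, one_div]
  exact (hu.fun_mul hD').congr_deriv (by ring)

theorem hasDerivAt_phiSeq_w (hw : w ≠ 0) (hD : w * x + z * y ≠ 0) :
    HasDerivAt (fun t => phiSeq n t z x y)
      (n * y * (-y / w) ^ (n - 1) / (w ^ 2 * (w * x + z * y))
        - x * (-y / w) ^ n / (w * x + z * y) ^ 2) w := by
  have hu := ((hasDerivAt_const w (-y)).fun_div (hasDerivAt_id' w) hw).fun_pow n
  have hD' := (((hasDerivAt_id' w).mul_const x).add_const (z * y)).fun_inv hD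
  simp only [phiSeq, one_div]
  -- keeping `-y / w` opaque stops `field_simp` from splitting its powers
  exact (hu.fun_mul hD').congr_deriv (by generalize -y / w = u; field_simp; ring)

theorem hasDerivAt_phiSeq_z (hD : w * x + z * y ≠ 0) :
    HasDerivAt (fun t => phiSeq n w t x y) (-y * (-y / w) ^ n / (w * x + z * y) ^ 2) z := by
  have hD' := (((hasDerivAt_id' z).mul_const y).const_add (w * x)).fun_inv hD
  simp only [phiSeq, one_div]
  exact (hD'.const_mul _).congr_deriv (by ring)

theorem hasDerivAt_px_phiSeq_x (hD : w * x + z * y ≠ 0) :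
    HasDerivAt (fun t => -w * (-y / w) ^ n / (w * t + z * y) ^ 2)
      (2 * w ^ 2 * (-y / w) ^ n / (w * x + z * y) ^ 3) x := by
  have hD2 := (((hasDerivAt_id' x).const_mul w).add_const (z * y)).fun_pow 2
  exact ((hasDerivAt_const x _).div hD2 (pow_ne_zero 2 hD)).congr_deriv
    (by norm_num; field_simp)

theorem hasDerivAt_py_phiSeq_x (hw : w ≠ 0) (hD : w * x + z * y ≠ 0) :
    HasDerivAt (fun t => -(n / w) * (-y / w) ^ (n - 1) / (w * t + z * y)
        - z * (-y / w) ^ n / (w * t + z * y) ^ 2)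
      (n * (-y / w) ^ (n - 1) / (w * x + z * y) ^ 2
        + 2 * z * w * (-y / w) ^ n / (w * x + z * y) ^ 3) x := by
  have hD1 := ((hasDerivAt_id' x).const_mul w).add_const (z * y)
  exact (((hasDerivAt_const x _).div hD1 hD).sub
    ((hasDerivAt_const x _).div (hD1.fun_pow 2) (pow_ne_zero 2 hD))).congr_deriv
    (by generalize -y / w = u; norm_num; field_simp; ring)

theorem hasDerivAt_py_phiSeq_y (hw : w ≠ 0) (hD : w * x + z * y ≠ 0) :
    HasDerivAt (fun t => -(n / w) * (-t / w) ^ (n - 1) / (w * x + z * t)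
        - z * (-t / w) ^ n / (w * x + z * t) ^ 2)
      (n * (n - 1 : ℕ) * (-y / w) ^ (n - 2) / (w ^ 2 * (w * x + z * y))
        + 2 * n * z * (-y / w) ^ (n - 1) / (w * (w * x + z * y) ^ 2)
        + 2 * z ^ 2 * (-y / w) ^ n / (w * x + z * y) ^ 3) y := by
  have hu := (hasDerivAt_id' y).fun_neg.div_const w
  have hD1 := ((hasDerivAt_id' y).const_mul z).const_add (w * x)
  have h := (((hu.fun_pow (n - 1)).const_mul (-(n / w))).div hD1 hD).sub
    (((hu.fun_pow n).const_mul z).div (hD1.fun_pow 2) (pow_ne_zero 2 hD))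
  rw [Nat.sub_sub] at h
  exact h.congr_deriv (by generalize -y / w = u; norm_num; field_simp; ring)

theorem hasDerivAt_pw_phiSeq_x (hw : w ≠ 0) (hD : w * x + z * y ≠ 0) :
    HasDerivAt (fun t => n * y * (-y / w) ^ (n - 1) / (w ^ 2 * (w * t + z * y))
        - t * (-y / w) ^ n / (w * t + z * y) ^ 2)
      (-n * y * (-y / w) ^ (n - 1) / (w * (w * x + z * y) ^ 2)
        - (-y / w) ^ n / (w * x + z * y) ^ 2
        + 2 * w * x * (-y / w) ^ n / (w * x + z * y) ^ 3) x := by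
  have hD1 := ((hasDerivAt_id' x).const_mul w).add_const (z * y)
  exact (((hasDerivAt_const x _).div (hD1.const_mul (w ^ 2))
    (mul_ne_zero (pow_ne_zero 2 hw) hD)).sub
    (((hasDerivAt_id' x).mul_const _).div (hD1.fun_pow 2) (pow_ne_zero 2 hD))).congr_deriv
    (by generalize -y / w = u; norm_num; field_simp; ring)

theorem hasDerivAt_pz_phiSeq_y (hD : w * x + z * y ≠ 0) :
    HasDerivAt (fun t => -t * (-t / w) ^ n / (w * x + z * t) ^ 2)
      (-(-y / w) ^ n / (w * x + z * y) ^ 2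
        + n * y * (-y / w) ^ (n - 1) / (w * (w * x + z * y) ^ 2)
        + 2 * y * z * (-y / w) ^ n / (w * x + z * y) ^ 3) y := by
  have hu := ((hasDerivAt_id' y).fun_neg.div_const w).fun_pow n
  have hD2 := (((hasDerivAt_id' y).const_mul z).const_add (w * x)).fun_pow 2
  exact (((hasDerivAt_id' y).fun_neg.fun_mul hu).div hD2 (pow_ne_zero 2 hD)).congr_deriv
    (by generalize -y / w = u; norm_num; field_simp)

theorem px_phiSeq : EqOnDomain (px (phiSeq n))
    fun w z x y => -w * (-y / w) ^ n / (w * x + z * y) ^ 2 :=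
  fun _ _ _ _ _ hD => (hasDerivAt_phiSeq_x n hD).deriv

theorem py_phiSeq : EqOnDomain (py (phiSeq n))
    fun w z x y => -(n / w) * (-y / w) ^ (n - 1) / (w * x + z * y)
      - z * (-y / w) ^ n / (w * x + z * y) ^ 2 :=
  fun _ _ _ _ _ hD => (hasDerivAt_phiSeq_y n hD).deriv

theorem pw_phiSeq : EqOnDomain (pw (phiSeq n))
    fun w z x y => n * y * (-y / w) ^ (n - 1) / (w ^ 2 * (w * x + z * y))
      - x * (-y / w) ^ n / (w * x + z * y) ^ 2 :=
  fun _ _ _ _ hw hD => (hasDerivAt_phiSeq_w n hw hD).deriv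

theorem pz_phiSeq : EqOnDomain (pz (phiSeq n))
    fun w z x y => -y * (-y / w) ^ n / (w * x + z * y) ^ 2 :=
  fun _ _ _ _ _ hD => (hasDerivAt_phiSeq_z n hD).deriv

theorem px_px_phiSeq : EqOnDomain (px (px (phiSeq n)))
    fun w z x y => 2 * w ^ 2 * (-y / w) ^ n / (w * x + z * y) ^ 3 :=
  (px_phiSeq n).px.trans fun _ _ _ _ _ hD => (hasDerivAt_px_phiSeq_x n hD).deriv

theorem px_py_phiSeq : EqOnDomain (px (py (phiSeq n)))
    fun w z x y => n * (-y / w) ^ (n - 1) / (w * x + z * y) ^ 2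
      + 2 * z * w * (-y / w) ^ n / (w * x + z * y) ^ 3 :=
  (py_phiSeq n).px.trans fun _ _ _ _ hw hD => (hasDerivAt_py_phiSeq_x n hw hD).deriv

theorem py_py_phiSeq : EqOnDomain (py (py (phiSeq n)))
    fun w z x y => n * (n - 1 : ℕ) * (-y / w) ^ (n - 2) / (w ^ 2 * (w * x + z * y))
      + 2 * n * z * (-y / w) ^ (n - 1) / (w * (w * x + z * y) ^ 2)
      + 2 * z ^ 2 * (-y / w) ^ n / (w * x + z * y) ^ 3 :=
  (py_phiSeq n).py.trans fun _ _ _ _ hw hD => (hasDerivAt_py_phiSeq_y n hw hD).deriv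

theorem px_pw_phiSeq : EqOnDomain (px (pw (phiSeq n)))
    fun w z x y => -n * y * (-y / w) ^ (n - 1) / (w * (w * x + z * y) ^ 2)
      - (-y / w) ^ n / (w * x + z * y) ^ 2 + 2 * w * x * (-y / w) ^ n / (w * x + z * y) ^ 3 :=
  (pw_phiSeq n).px.trans fun _ _ _ _ hw hD => (hasDerivAt_pw_phiSeq_x n hw hD).deriv

theorem py_pz_phiSeq : EqOnDomain (py (pz (phiSeq n)))
    fun w z x y => -(-y / w) ^ n / (w * x + z * y) ^ 2
      + n * y * (-y / w) ^ (n - 1) / (w * (w * x + z * y) ^ 2)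
      + 2 * y * z * (-y / w) ^ n / (w * x + z * y) ^ 3 :=
  (pz_phiSeq n).py.trans fun _ _ _ _ _ hD => (hasDerivAt_pz_phiSeq_y n hD).deriv

theorem px_pw_add_py_pz_phiSeq (hw : w ≠ 0) (hD : w * x + z * y ≠ 0) :
    px (pw (phiSeq n)) w z x y + py (pz (phiSeq n)) w z x y = 0 := by
  rw [px_pw_phiSeq n w z x y hw hD, py_pz_phiSeq n w z x y hw hD]
  dsimp only
  generalize -y / w = u
  field_simp
  ring

theorem px_px_mul_py_py_sub_px_py_sq_phiSeq (hw : w ≠ 0) (hD : w * x + z * y ≠ 0) :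
    px (px (phiSeq n)) w z x y * py (py (phiSeq n)) w z x y - (px (py (phiSeq n)) w z x y) ^ 2
      = n * (n - 2) * ((-y / w) ^ (n - 1)) ^ 2 / (w * x + z * y) ^ 4 := by
  rw [px_px_phiSeq n w z x y hw hD, py_py_phiSeq n w z x y hw hD,
    px_py_phiSeq n w z x y hw hD]
  dsimp only
  generalize -y / w = u
  generalize w * x + z * y = D at hD ⊢
  -- the truncated exponents `n - 1`, `n - 2` only line up once `n ≥ 2`
  rcases n with _ | _ | n
  all_goals push_cast [Nat.add_sub_cancel]; field_simp; ring

theorem secondHeavenly_phiSeq (hw : w ≠ 0) (hD : w * x + z * y ≠ 0) :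
    secondHeavenly (phiSeq n) w z x y
      = n * (n - 2) * ((-y / w) ^ (n - 1)) ^ 2 / (w * x + z * y) ^ 4 := by
  rw [secondHeavenly, px_pw_add_py_pz_phiSeq n hw hD,
    ← px_px_mul_py_py_sub_px_py_sq_phiSeq n hw hD, zero_add]

end

/-- Θ = φ_n satisfies the full nonlinear second heavenly equation on
{w ≠ 0, wx+zy ≠ 0} if and only if n = 0 or n = 2. -/
theorem phiSeq_solves_second_heavenly_iff (n : ℕ) :
    (∀ w z x y : ℂ, w ≠ 0 → w * x + z * y ≠ 0 →
      px (pw (phiSeq n)) w z x y + py (pz (phiSeq n)) w z x y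
        + px (px (phiSeq n)) w z x y * py (py (phiSeq n)) w z x y
        - (px (py (phiSeq n)) w z x y) ^ 2 = 0)
      ↔ (n = 0 ∨ n = 2) := by
  refine ⟨fun h => ?_, fun hn w z x y hw hD => ?_⟩
  · have h1 : secondHeavenly (phiSeq n) 1 0 1 1 = 0 := h 1 0 1 1 one_ne_zero (by norm_num)
    rw [secondHeavenly_phiSeq n one_ne_zero (by norm_num)] at h1
    have hn : (n : ℂ) * (n - 2) = 0 := by simpa [← pow_mul] using h1
    rcases mul_eq_zero.mp hn with h0 | h2
    · exact Or.inl (by exact_mod_cast h0)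
    · exact Or.inr (by exact_mod_cast sub_eq_zero.mp h2)
  · change secondHeavenly (phiSeq n) w z x y = 0
    rw [secondHeavenly_phiSeq n hw hD]
    rcases hn with rfl | rfl <;> norm_num
end

section
/- Let ψ(w,z,x,y) = 1/(wx+zy). Then ψ satisfies the curved wave equation on the Sparling–Tod background: ψ_{xw} + ψ_{yz} + 2σ(wx+zy)^{−3}(z²ψ_{xx} + w²ψ_{yy} − 2wz ψ_{xy}) = 0, for any constant σ, on the region where wx+zy ≠ 0. -/
/-!
With `L = wx + zy` and `ψ = 1/L`, the chain rule gives `ψ_{ij} = 2 L_i L_j / L³ - L_{ij} / L²`.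
The flat part vanishes because `L_x L_w + L_y L_z = L` while `L_{xw} = L_{yz} = 1`, and the
curvature part is `2 (z L_x - w L_y)² / L³ = 0`: the direction `z ∂_x - w ∂_y` is tangent to the
level sets of `L`.
-/

section AffineDerivatives

variable {𝕜 : Type*} [NontriviallyNormedField 𝕜]

/-- No hypothesis is needed: at the pole both sides are `0` by Mathlib's conventions. -/
theorem deriv_one_div_affine {f : 𝕜 → 𝕜} (a b t : 𝕜) (hf : ∀ s, f s = 1 / (a * s + b)) :
    deriv f t = -a / (a * t + b) ^ 2 := by
  have hinv : deriv (fun u : 𝕜 => (u + b)⁻¹) (a * t) = -((a * t + b) ^ 2)⁻¹ :=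
    (deriv_comp_add_const (fun u : 𝕜 => u⁻¹) b (a * t)).trans deriv_inv
  calc deriv f t = deriv (fun s => (a * s + b)⁻¹) t := by
        simp only [funext hf, one_div]
    _ = a • deriv (fun u => (u + b)⁻¹) (a * t) := deriv_comp_mul_left a (fun u => (u + b)⁻¹) t
    _ = -a / (a * t + b) ^ 2 := by rw [hinv, smul_eq_mul]; ring

theorem deriv_affine_div_affine_sq {f : 𝕜 → 𝕜} (a b c d t : 𝕜)
    (hf : ∀ s, f s = (c * s + d) / (a * s + b) ^ 2) (h : a * t + b ≠ 0) :
    deriv f t = (c * (a * t + b) - 2 * a * (c * t + d)) / (a * t + b) ^ 3 := by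
  have hnum : HasDerivAt (fun s => c * s + d) c t := by
    simpa using ((hasDerivAt_id t).const_mul c).add_const d
  have hden : HasDerivAt (fun s => (a * s + b) ^ 2) (2 * (a * t + b) * a) t := by
    simpa using (((hasDerivAt_id t).const_mul a).add_const b).fun_pow 2
  rw [show f = _ from funext hf]
  refine ((hnum.div hden (pow_ne_zero 2 h)).congr_deriv ?_).deriv
  field_simp

end AffineDerivatives

noncomputable def invPairing : ℂ → ℂ → ℂ → ℂ → ℂ := fun w z x y => 1 / (w * x + z * y)

theorem pw_invPairing : pw invPairing = fun w z x y => -x / (w * x + z * y) ^ 2 := by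
  funext w z x y
  exact (deriv_one_div_affine x (z * y) w fun s => by simp only [invPairing]; ring).trans
    (by ring)

theorem pz_invPairing : pz invPairing = fun w z x y => -y / (w * x + z * y) ^ 2 := by
  funext w z x y
  exact (deriv_one_div_affine y (w * x) z fun s => by simp only [invPairing]; ring).trans
    (by ring)

theorem px_invPairing : px invPairing = fun w z x y => -w / (w * x + z * y) ^ 2 := by
  funext w z x y
  exact deriv_one_div_affine w (z * y) x fun s => rfl

theorem py_invPairing : py invPairing = fun w z x y => -z / (w * x + z * y) ^ 2 := by
  funext w z x y
  exact (deriv_one_div_affine z (w * x) y fun s => by simp only [invPairing]; ring).trans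
    (by ring)

section SecondPartials

variable {w z x y : ℂ}

theorem px_pw_invPairing (h : w * x + z * y ≠ 0) :
    px (pw invPairing) w z x y = (2 * w * x - (w * x + z * y)) / (w * x + z * y) ^ 3 :=
  (deriv_affine_div_affine_sq w (z * y) (-1) 0 x
    (fun s => by simp only [pw_invPairing]; ring) h).trans (by ring)

theorem py_pz_invPairing (h : w * x + z * y ≠ 0) :
    py (pz invPairing) w z x y = (2 * z * y - (w * x + z * y)) / (w * x + z * y) ^ 3 :=
  (deriv_affine_div_affine_sq z (w * x) (-1) 0 y
    (fun s => by simp only [pz_invPairing]; ring) (by rwa [add_comm])).trans (by ring)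

theorem px_px_invPairing (h : w * x + z * y ≠ 0) :
    px (px invPairing) w z x y = 2 * w ^ 2 / (w * x + z * y) ^ 3 :=
  (deriv_affine_div_affine_sq w (z * y) 0 (-w) x
    (fun s => by simp only [px_invPairing]; ring) h).trans (by ring)

theorem py_py_invPairing (h : w * x + z * y ≠ 0) :
    py (py invPairing) w z x y = 2 * z ^ 2 / (w * x + z * y) ^ 3 :=
  (deriv_affine_div_affine_sq z (w * x) 0 (-z) y
    (fun s => by simp only [py_invPairing]; ring) (by rwa [add_comm])).trans (by ring)

theorem px_py_invPairing (h : w * x + z * y ≠ 0) :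
    px (py invPairing) w z x y = 2 * w * z / (w * x + z * y) ^ 3 :=
  (deriv_affine_div_affine_sq w (z * y) 0 (-z) x
    (fun s => by simp only [py_invPairing]; ring) h).trans (by ring)

end SecondPartials

/-- ψ = 1/(wx+zy) satisfies the curved wave equation on the Sparling–Tod
background: ψ_{xw} + ψ_{yz} + 2σ(wx+zy)⁻³(z²ψ_{xx} + w²ψ_{yy} − 2wzψ_{xy}) = 0. -/
theorem curved_wave_sparlingTod (σ : ℂ) (w z x y : ℂ)
    (h : w * x + z * y ≠ 0) :
    let ψ : ℂ → ℂ → ℂ → ℂ → ℂ := fun w z x y => 1 / (w * x + z * y)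
    px (pw ψ) w z x y + py (pz ψ) w z x y
      + 2 * σ / (w * x + z * y) ^ 3 *
        (z ^ 2 * px (px ψ) w z x y + w ^ 2 * py (py ψ) w z x y
          - 2 * w * z * px (py ψ) w z x y) = 0 := by
  intro ψ
  have hψ : ψ = invPairing := rfl
  have flat : px (pw ψ) w z x y + py (pz ψ) w z x y = 0 := by
    rw [hψ, px_pw_invPairing h, py_pz_invPairing h]
    field_simp
    ring
  have transverse : z ^ 2 * px (px ψ) w z x y + w ^ 2 * py (py ψ) w z x y
      - 2 * w * z * px (py ψ) w z x y = 0 := by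
    rw [hψ, px_px_invPairing h, py_py_invPairing h, px_py_invPairing h]
    ring
  rw [flat, transverse, mul_zero, add_zero]
end
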